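/- Let n ≥ 3, let 0 ≤ k < n, and let v ∈ ℂ with |v| = 1; assume v ≠ ±1 in case k = 0 or 2k = n. For 0 < |q| < 1 set x(q) = X(vq^k,qⁿ), y(q) = Y(vq^k,qⁿ), a₄(qⁿ) = −5 Σ_{m≥1} σ₃(m) qⁿᵐ, α₃(q) = x(q) + 2y(q), s'(q) = (a₄(qⁿ) − x(q) + 3x(q)²)/α₃(q), α₁(q) = (x(q) + 6x(q)² + 2a₄(qⁿ))/α₃(q), and α₂(q) = 3x(q) − s'(q) − s'(q)². Then x and y extend holomorphically across q = 0; there is ε ∈ (0,1) such that α₃(q) ≠ 0 for 0 < |q| < ε; and α₁, α₂, α₃ extend holomorphically across q = 0 on the disc |q| < ε. Moreover, the holomorphic extension of α₃ vanishes at q = 0 to order 0 with value (v+v²)/(1−v)³ if k = 0; to order exactly k with leading coefficient v if 0 < k < n/2; to order exactly n/2 with leading coefficient v − v^{−1} if 2k = n; and to order exactly n−k with leading coefficient −v^{−1} if n/2 < k < n. -/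

import Mathlib

/-- `s₁(Q) = Σ_{m≥1} σ₁(m) Qᵐ`. -/
noncomputable def s1ser (Q : ℂ) : ℂ :=
  ∑' m : ℕ, (∑ d ∈ Nat.divisors (m + 1), (d : ℂ)) * Q ^ (m + 1)

/-- `X(u,Q) = Σ_{m∈ℤ} Qᵐu/(1−Qᵐu)² − 2s₁(Q)`. -/
noncomputable def Xtate (u Q : ℂ) : ℂ :=
  (∑' m : ℤ, Q ^ m * u / (1 - Q ^ m * u) ^ 2) - 2 * s1ser Q

/-- `Y(u,Q) = Σ_{m∈ℤ} (Qᵐu)²/(1−Qᵐu)³ + s₁(Q)`. -/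
noncomputable def Ytate (u Q : ℂ) : ℂ :=
  (∑' m : ℤ, (Q ^ m * u) ^ 2 / (1 - Q ^ m * u) ^ 3) + s1ser Q

/-- `x(q) = X(vqᵏ, qⁿ)`. -/
noncomputable def xT (n k : ℕ) (v q : ℂ) : ℂ := Xtate (v * q ^ k) (q ^ n)

/-- `y(q) = Y(vqᵏ, qⁿ)`. -/
noncomputable def yT (n k : ℕ) (v q : ℂ) : ℂ := Ytate (v * q ^ k) (q ^ n)

/-- `a₄(qⁿ) = −5 Σ_{m≥1} σ₃(m) qⁿᵐ`. -/
noncomputable def a4T (n : ℕ) (q : ℂ) : ℂ :=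
  -5 * ∑' m : ℕ, (∑ d ∈ Nat.divisors (m + 1), (d : ℂ) ^ 3) * q ^ (n * (m + 1))

/-- `α₃(q) = x(q) + 2y(q)`. -/
noncomputable def α₃T (n k : ℕ) (v q : ℂ) : ℂ := xT n k v q + 2 * yT n k v q

/-- `s'(q) = (a₄(qⁿ) − x(q) + 3x(q)²)/α₃(q)`. -/
noncomputable def s'T (n k : ℕ) (v q : ℂ) : ℂ :=
  (a4T n q - xT n k v q + 3 * xT n k v q ^ 2) / α₃T n k v q

/-- `α₁(q) = (x(q) + 6x(q)² + 2a₄(qⁿ))/α₃(q)`. -/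
noncomputable def α₁T (n k : ℕ) (v q : ℂ) : ℂ :=
  (xT n k v q + 6 * xT n k v q ^ 2 + 2 * a4T n q) / α₃T n k v q

/-- `α₂(q) = 3x(q) − s'(q) − s'(q)²`. -/
noncomputable def α₂T (n k : ℕ) (v q : ℂ) : ℂ :=
  3 * xT n k v q - s'T n k v q - s'T n k v q ^ 2

/-- `g` is holomorphic on the disc of radius `ε` about `0` and agrees with `f` on the
corresponding punctured disc. -/
def ExtendsHolo (ε : ℝ) (g f : ℂ → ℂ) : Prop :=
  DifferentiableOn ℂ g (Metric.ball (0 : ℂ) ε) ∧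
    ∀ q ∈ Metric.ball (0 : ℂ) ε, q ≠ 0 → g q = f q

/-!
Split the sum over `m ∈ ℤ` at `m = 0`. For `m ≥ 0` put `w = v q^{nm+k}`; for `m < 0` put
`w = v⁻¹ q^{n|m|-k}` and use `u⁻¹/(1-u⁻¹)² = u/(1-u)²` and `u⁻²/(1-u⁻¹)³ = -u/(1-u)³`. Then
every term is a rational function of some `w = c qᵉ` with `|c| = 1`, and `e ≥ 1` except for
`m = 0` when `k = 0`, so on `|q| < 1/2` the series converge uniformly: `x` and `y` are
holomorphic there, including at `q = 0`, where the definitions (read with `0⁻¹ = 0`) already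
take the right values. In `x + 2y` the `s₁` terms cancel and the `m`-th term becomes
`±w(1+w)/(1-w)³ = ±(w + O(w²))`, so `α₃ = q^r h(q)` with `r = min(k, n-k)`, and `h(0)` is read
off from the terms `m = 0` (`v qᵏ`) and `m = -1` (`-v⁻¹ q^{n-k}`). Since `x` and `a₄(qⁿ)` are
divisible by `q^r` as well, this factor cancels in `α₁` and `s'`, so that `α₁`, `s'` and
`α₂` extend holomorphically wherever `h ≠ 0`.
-/

open Metric
open scoped ArithmeticFunction.sigma

namespace TateCurve

theorem norm_pow_mul_le {ρ M : ℝ} {q z : ℂ} (hq : q ∈ ball (0 : ℂ) ρ) (hz : ‖z‖ ≤ M) (e : ℕ) :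
    ‖q ^ e * z‖ ≤ M * ρ ^ e := by
  rw [mem_ball_zero_iff] at hq
  rw [norm_mul, norm_pow, mul_comm]
  exact mul_le_mul hz (pow_le_pow_left₀ (norm_nonneg q) hq.le e) (by positivity)
    ((norm_nonneg z).trans hz)

section MTest

variable {ρ : ℝ} {e : ℕ → ℕ} {g : ℕ → ℂ → ℂ} {M : ℕ → ℝ}

theorem summable_pow_mul (hgM : ∀ j, ∀ q ∈ ball (0 : ℂ) ρ, ‖g j q‖ ≤ M j)
    (hM : Summable fun j => M j * ρ ^ e j) {q : ℂ} (hq : q ∈ ball (0 : ℂ) ρ) :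
    Summable fun j => q ^ e j * g j q :=
  hM.of_norm_bounded fun j => norm_pow_mul_le hq (hgM j q hq) (e j)

theorem differentiableOn_tsum_pow_mul (hg : ∀ j, DifferentiableOn ℂ (g j) (ball 0 ρ))
    (hgM : ∀ j, ∀ q ∈ ball (0 : ℂ) ρ, ‖g j q‖ ≤ M j) (hM : Summable fun j => M j * ρ ^ e j) :
    DifferentiableOn ℂ (fun q => ∑' j, q ^ e j * g j q) (ball 0 ρ) :=
  Complex.differentiableOn_tsum_of_summable_norm hM
    (fun j => (differentiableOn_pow (e j)).mul (hg j)) isOpen_ball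
    fun j q hq => norm_pow_mul_le hq (hgM j q hq) (e j)

end MTest

noncomputable def xKernel (w : ℂ) : ℂ := ((1 - w) ^ 2)⁻¹

noncomputable def α₃Kernel (w : ℂ) : ℂ := (1 + w) / (1 - w) ^ 3

theorem α₃Kernel_zero : α₃Kernel 0 = 1 := by simp [α₃Kernel]

theorem half_le_norm_one_sub {w : ℂ} (hw : w ∈ ball (0 : ℂ) (1 / 2)) : 1 / 2 ≤ ‖1 - w‖ := by
  rw [mem_ball_zero_iff] at hw
  have := norm_sub_norm_le (1 : ℂ) w
  rw [norm_one] at this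
  linarith

theorem one_sub_ne_zero_of_mem_ball {w : ℂ} (hw : w ∈ ball (0 : ℂ) (1 / 2)) : 1 - w ≠ 0 :=
  norm_pos_iff.mp ((by norm_num : (0 : ℝ) < 1 / 2).trans_le (half_le_norm_one_sub hw))

theorem differentiableOn_xKernel : DifferentiableOn ℂ xKernel (ball 0 (1 / 2)) :=
  ((differentiableOn_const 1).sub differentiableOn_id).pow 2 |>.inv
    fun _ hw => pow_ne_zero 2 (one_sub_ne_zero_of_mem_ball hw)

theorem differentiableOn_α₃Kernel : DifferentiableOn ℂ α₃Kernel (ball 0 (1 / 2)) :=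
  ((differentiableOn_const 1).add differentiableOn_id).div
    (((differentiableOn_const 1).sub differentiableOn_id).pow 3)
    fun _ hw => pow_ne_zero 3 (one_sub_ne_zero_of_mem_ball hw)

theorem norm_xKernel_le {w : ℂ} (hw : w ∈ ball (0 : ℂ) (1 / 2)) : ‖xKernel w‖ ≤ 4 := by
  have h := pow_le_pow_left₀ (by norm_num) (half_le_norm_one_sub hw) 2
  rw [xKernel, norm_inv, norm_pow]
  calc (‖1 - w‖ ^ 2)⁻¹ ≤ ((1 / 2 : ℝ) ^ 2)⁻¹ := inv_anti₀ (by norm_num) h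
    _ = 4 := by norm_num

theorem norm_α₃Kernel_le {w : ℂ} (hw : w ∈ ball (0 : ℂ) (1 / 2)) : ‖α₃Kernel w‖ ≤ 12 := by
  have h := pow_le_pow_left₀ (by norm_num) (half_le_norm_one_sub hw) 3
  have hnum : ‖1 + w‖ ≤ 3 / 2 := by
    rw [mem_ball_zero_iff] at hw
    linarith [norm_add_le (1 : ℂ) w, norm_one (α := ℂ)]
  rw [α₃Kernel, norm_div, norm_pow]
  calc ‖1 + w‖ / ‖1 - w‖ ^ 3 ≤ (3 / 2) / (1 / 2 : ℝ) ^ 3 :=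
        div_le_div₀ (by norm_num) hnum (by norm_num) h
    _ = 12 := by norm_num

theorem div_one_sub_sq_eq (w : ℂ) : w / (1 - w) ^ 2 = w * xKernel w := div_eq_mul_inv _ _

theorem inv_div_one_sub_inv_sq (w : ℂ) : w⁻¹ / (1 - w⁻¹) ^ 2 = w * xKernel w := by
  rcases eq_or_ne w 0 with rfl | hw0
  · simp
  rcases eq_or_ne w 1 with rfl | hw1
  · simp [xKernel]
  have : 1 - w ≠ 0 := sub_ne_zero.mpr (Ne.symm hw1)
  rw [xKernel]
  field_simp
  ring

theorem add_two_mul_sq_div (w : ℂ) :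
    w / (1 - w) ^ 2 + 2 * (w ^ 2 / (1 - w) ^ 3) = w * α₃Kernel w := by
  rcases eq_or_ne w 1 with rfl | hw1
  · simp [α₃Kernel]
  have : 1 - w ≠ 0 := sub_ne_zero.mpr (Ne.symm hw1)
  rw [α₃Kernel]
  field_simp
  ring

theorem inv_add_two_mul_sq_div (w : ℂ) :
    w⁻¹ / (1 - w⁻¹) ^ 2 + 2 * ((w⁻¹) ^ 2 / (1 - w⁻¹) ^ 3) = -(w * α₃Kernel w) := by
  rcases eq_or_ne w 0 with rfl | hw0
  · simp
  rcases eq_or_ne w 1 with rfl | hw1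
  · simp [α₃Kernel]
  have : 1 - w ≠ 0 := sub_ne_zero.mpr (Ne.symm hw1)
  rw [α₃Kernel]
  field_simp
  ring

/-- `q⁻ʳ ∑ⱼ wⱼ G(wⱼ)` with `wⱼ = c q^{aj+b}`, written so that it makes sense at `q = 0`. -/
noncomputable def lambertSeries (G : ℂ → ℂ) (c : ℂ) (a b r : ℕ) (q : ℂ) : ℂ :=
  ∑' j : ℕ, q ^ (a * j + b - r) * (c * G (c * q ^ (a * j + b)))

section Lambert

variable {G : ℂ → ℂ} {c : ℂ} {ρ M : ℝ}

theorem norm_mul_pow_lt (hc : ‖c‖ ≤ 1) (hρ : ρ ≤ 1) {q : ℂ} (hq : q ∈ ball (0 : ℂ) ρ) {e : ℕ}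
    (he : e ≠ 0) : c * q ^ e ∈ ball (0 : ℂ) ρ := by
  rw [mem_ball_zero_iff] at hq ⊢
  rw [norm_mul, norm_pow]
  calc ‖c‖ * ‖q‖ ^ e ≤ ‖q‖ ^ e := mul_le_of_le_one_left (by positivity) hc
    _ ≤ ‖q‖ := pow_le_of_le_one (norm_nonneg q) (by linarith) he
    _ < ρ := hq

theorem differentiableOn_mul_comp_mul_pow (hG : DifferentiableOn ℂ G (ball 0 ρ)) (hc : ‖c‖ ≤ 1)
    (hρ : ρ ≤ 1) (e : ℕ) : DifferentiableOn ℂ (fun q => c * G (c * q ^ e)) (ball 0 ρ) := by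
  rcases eq_or_ne e 0 with rfl | he
  · simp only [pow_zero]
    exact differentiableOn_const _
  exact (hG.comp ((differentiableOn_pow e).const_mul c)
    fun _ hq => norm_mul_pow_lt hc hρ hq he).const_mul c

/-- The term `‖c * G c‖` accounts for `e = 0`, where `c` itself may lie outside the disc. -/
theorem norm_mul_comp_mul_pow_le (hGM : ∀ w ∈ ball (0 : ℂ) ρ, ‖G w‖ ≤ M) (hc : ‖c‖ ≤ 1)
    (hρ : ρ ≤ 1) (e : ℕ) {q : ℂ} (hq : q ∈ ball (0 : ℂ) ρ) :
    ‖c * G (c * q ^ e)‖ ≤ max M ‖c * G c‖ := by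
  rcases eq_or_ne e 0 with rfl | he
  · simp
  calc ‖c * G (c * q ^ e)‖ ≤ ‖G (c * q ^ e)‖ := by
        rw [norm_mul]; exact mul_le_of_le_one_left (norm_nonneg _) hc
    _ ≤ M := hGM _ (norm_mul_pow_lt hc hρ hq he)
    _ ≤ max M ‖c * G c‖ := le_max_left _ _

variable {a b r : ℕ}

theorem summable_lambertSeries_majorant (hρ0 : 0 ≤ ρ) (hρ1 : ρ < 1) (ha : 1 ≤ a) (hrb : r ≤ b)
    (K : ℝ) (hK : 0 ≤ K) : Summable fun j : ℕ => K * ρ ^ (a * j + b - r) := by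
  refine ((summable_geometric_of_lt_one hρ0 hρ1).mul_left K).of_nonneg_of_le
    (fun j => by positivity) fun j =>
      mul_le_mul_of_nonneg_left (pow_le_pow_of_le_one hρ0 hρ1.le ?_) hK
  have := Nat.le_mul_of_pos_left j ha
  omega

theorem hasSum_lambertSeries (hGM : ∀ w ∈ ball (0 : ℂ) ρ, ‖G w‖ ≤ M) (hc : ‖c‖ ≤ 1)
    (hρ1 : ρ < 1) (ha : 1 ≤ a) (hrb : r ≤ b) {q : ℂ} (hq : q ∈ ball (0 : ℂ) ρ) :
    HasSum (fun j : ℕ => q ^ (a * j + b - r) * (c * G (c * q ^ (a * j + b))))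
      (lambertSeries G c a b r q) :=
  (summable_pow_mul (fun j _ hq => norm_mul_comp_mul_pow_le hGM hc hρ1.le (a * j + b) hq)
    (summable_lambertSeries_majorant (pos_of_mem_ball hq).le hρ1 ha hrb _
      ((norm_nonneg _).trans (le_max_right _ _))) hq).hasSum

theorem differentiableOn_lambertSeries (hG : DifferentiableOn ℂ G (ball 0 ρ))
    (hGM : ∀ w ∈ ball (0 : ℂ) ρ, ‖G w‖ ≤ M) (hc : ‖c‖ ≤ 1) (hρ0 : 0 ≤ ρ) (hρ1 : ρ < 1)
    (ha : 1 ≤ a) (hrb : r ≤ b) : DifferentiableOn ℂ (lambertSeries G c a b r) (ball 0 ρ) :=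
  differentiableOn_tsum_pow_mul
    (fun j => differentiableOn_mul_comp_mul_pow hG hc hρ1.le (a * j + b))
    (fun j _ hq => norm_mul_comp_mul_pow_le hGM hc hρ1.le (a * j + b) hq)
    (summable_lambertSeries_majorant hρ0 hρ1 ha hrb _ ((norm_nonneg _).trans (le_max_right _ _)))

theorem pow_mul_lambertSeries (hrb : r ≤ b) (q : ℂ) :
    q ^ r * lambertSeries G c a b r q = lambertSeries G c a b 0 q := by
  rw [lambertSeries, lambertSeries, ← tsum_mul_left]
  refine tsum_congr fun j => ?_
  rw [← mul_assoc, ← pow_add, Nat.sub_zero, Nat.add_sub_cancel' (by omega)]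

theorem lambertSeries_self_apply_zero (ha : 1 ≤ a) :
    lambertSeries G c a b b 0 = c * G (c * 0 ^ b) := by
  rw [lambertSeries, tsum_eq_single 0 fun j hj => by
    rw [zero_pow (by rw [Nat.add_sub_cancel]; exact mul_ne_zero (by omega) hj), zero_mul]]
  simp

theorem lambertSeries_apply_zero_of_lt (hrb : r < b) :
    lambertSeries G c a b r 0 = 0 := by
  rw [lambertSeries]
  refine (tsum_congr fun j => ?_).trans tsum_zero
  rw [zero_pow (by omega), zero_mul]

end Lambert

noncomputable def sigmaSeries (i : ℕ) (Q : ℂ) : ℂ := ∑' j : ℕ, Q ^ j * (σ i (j + 1) : ℂ)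

theorem summable_sigma_mul_pow (i : ℕ) {ρ : ℝ} (hρ0 : 0 < ρ) (hρ1 : ρ < 1) :
    Summable fun j : ℕ => ((σ i (j + 1) : ℕ) : ℝ) * ρ ^ j := by
  have hρ : ‖ρ‖ < 1 := by rwa [Real.norm_eq_abs, abs_of_pos hρ0]
  have h := (summable_nat_add_iff (f := fun j : ℕ => (j : ℝ) ^ (i + 1) * ρ ^ j) 1).mpr
    (summable_pow_mul_geometric_of_norm_lt_one (i + 1) hρ)
  refine (h.div_const ρ).of_nonneg_of_le (fun j => by positivity) fun j => ?_
  have hσ : (σ i (j + 1) : ℝ) ≤ ((j + 1 : ℕ) : ℝ) ^ (i + 1) := by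
    exact_mod_cast ArithmeticFunction.sigma_le_pow_succ i (j + 1)
  calc (σ i (j + 1) : ℝ) * ρ ^ j ≤ ((j + 1 : ℕ) : ℝ) ^ (i + 1) * ρ ^ j :=
        mul_le_mul_of_nonneg_right hσ (by positivity)
    _ = ((j + 1 : ℕ) : ℝ) ^ (i + 1) * ρ ^ (j + 1) / ρ := by
        rw [pow_succ ρ j, ← mul_assoc, mul_div_cancel_right₀ _ hρ0.ne']

theorem differentiableOn_sigmaSeries (i : ℕ) {ρ : ℝ} (hρ0 : 0 < ρ) (hρ1 : ρ < 1) :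
    DifferentiableOn ℂ (sigmaSeries i) (ball 0 ρ) :=
  differentiableOn_tsum_pow_mul (e := fun j => j) (fun _ => differentiableOn_const _)
    (fun _ _ _ => (Complex.norm_natCast _).le) (summable_sigma_mul_pow i hρ0 hρ1)

theorem s1ser_eq_mul_sigmaSeries (Q : ℂ) : s1ser Q = Q * sigmaSeries 1 Q := by
  rw [s1ser, sigmaSeries, ← tsum_mul_left]
  refine tsum_congr fun m => ?_
  simp only [ArithmeticFunction.sigma_apply, pow_one]
  push_cast
  ring

theorem a4T_eq_mul_sigmaSeries (n : ℕ) (q : ℂ) :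
    a4T n q = -5 * (q ^ n * sigmaSeries 3 (q ^ n)) := by
  rw [a4T, sigmaSeries, ← tsum_mul_left, ← tsum_mul_left, ← tsum_mul_left]
  refine tsum_congr fun m => ?_
  simp only [ArithmeticFunction.sigma_apply, pow_mul]
  push_cast
  ring

theorem zpow_natCast_mul_eq (q v : ℂ) (n k j : ℕ) :
    (q ^ n) ^ (j : ℤ) * (v * q ^ k) = v * q ^ (n * j + k) := by
  rw [zpow_natCast, ← pow_mul, pow_add]
  ring

theorem zpow_neg_succ_mul_eq (q v : ℂ) {n k : ℕ} (hk : k < n) (j : ℕ) :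
    (q ^ n) ^ (-((j : ℤ) + 1)) * (v * q ^ k) = (v⁻¹ * q ^ (n * j + (n - k)))⁻¹ := by
  rw [show -((j : ℤ) + 1) = -((j + 1 : ℕ) : ℤ) by push_cast; ring, zpow_neg, zpow_natCast]
  rcases eq_or_ne q 0 with rfl | hq
  · simp [zero_pow (show n ≠ 0 by omega), zero_pow (show n * j + (n - k) ≠ 0 by omega)]
  have hsplit : q ^ (n * j + (n - k)) * q ^ k = (q ^ n) ^ (j + 1) := by
    rw [← pow_add, ← pow_mul]
    congr 1
    rw [mul_add, mul_one]
    omega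
  rw [← hsplit]
  field_simp

theorem hasSum_int_of_nat_of_neg {F : ℂ → ℂ} {q v A B : ℂ} {n k : ℕ} (hk : k < n)
    (hpos : HasSum (fun j : ℕ => F (v * q ^ (n * j + k))) A)
    (hneg : HasSum (fun j : ℕ => F (v⁻¹ * q ^ (n * j + (n - k)))⁻¹) B) :
    HasSum (fun m : ℤ => F ((q ^ n) ^ m * (v * q ^ k))) (A + B) :=
  HasSum.of_nat_of_neg_add_one (hpos.congr_fun fun j => by rw [zpow_natCast_mul_eq])
    (hneg.congr_fun fun j => by rw [zpow_neg_succ_mul_eq q v hk])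

variable {n k : ℕ} {v q : ℂ}

theorem norm_inv_le_one_of_norm_eq_one (hv : ‖v‖ = 1) : ‖v⁻¹‖ ≤ 1 := by
  rw [norm_inv, hv, inv_one]

theorem hasSum_xTerm (hk : k < n) (hv : ‖v‖ = 1) (hq : q ∈ ball (0 : ℂ) (1 / 2)) :
    HasSum (fun m : ℤ => (q ^ n) ^ m * (v * q ^ k) / (1 - (q ^ n) ^ m * (v * q ^ k)) ^ 2)
      (lambertSeries xKernel v n k 0 q + lambertSeries xKernel v⁻¹ n (n - k) 0 q) := by
  have hsum := fun c (hc : ‖c‖ ≤ 1) b =>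
    hasSum_lambertSeries (fun _ hw => norm_xKernel_le hw) hc (by norm_num) (a := n) (b := b)
      (by omega) (Nat.zero_le _) hq
  refine hasSum_int_of_nat_of_neg (F := fun u => u / (1 - u) ^ 2) hk
    ((hsum v hv.le k).congr_fun fun j => ?_)
    ((hsum v⁻¹ (norm_inv_le_one_of_norm_eq_one hv) (n - k)).congr_fun fun j => ?_)
  · rw [div_one_sub_sq_eq, Nat.sub_zero]; ring
  · rw [inv_div_one_sub_inv_sq, Nat.sub_zero]; ring

theorem hasSum_α₃Term (hk : k < n) (hv : ‖v‖ = 1) (hq : q ∈ ball (0 : ℂ) (1 / 2)) :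
    HasSum (fun m : ℤ => (q ^ n) ^ m * (v * q ^ k) / (1 - (q ^ n) ^ m * (v * q ^ k)) ^ 2
        + 2 * (((q ^ n) ^ m * (v * q ^ k)) ^ 2 / (1 - (q ^ n) ^ m * (v * q ^ k)) ^ 3))
      (lambertSeries α₃Kernel v n k 0 q - lambertSeries α₃Kernel v⁻¹ n (n - k) 0 q) := by
  have hsum := fun c (hc : ‖c‖ ≤ 1) b =>
    hasSum_lambertSeries (fun _ hw => norm_α₃Kernel_le hw) hc (by norm_num) (a := n) (b := b)
      (by omega) (Nat.zero_le _) hq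
  rw [sub_eq_add_neg]
  refine hasSum_int_of_nat_of_neg (F := fun u => u / (1 - u) ^ 2 + 2 * (u ^ 2 / (1 - u) ^ 3)) hk
    ((hsum v hv.le k).congr_fun fun j => ?_)
    ((hsum v⁻¹ (norm_inv_le_one_of_norm_eq_one hv) (n - k)).neg.congr_fun fun j => ?_)
  · rw [add_two_mul_sq_div, Nat.sub_zero]; ring
  · rw [inv_add_two_mul_sq_div, Nat.sub_zero]; ring

theorem xT_eq_lambertSeries (hk : k < n) (hv : ‖v‖ = 1) (hq : q ∈ ball (0 : ℂ) (1 / 2)) :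
    xT n k v q = lambertSeries xKernel v n k 0 q + lambertSeries xKernel v⁻¹ n (n - k) 0 q
      - 2 * (q ^ n * sigmaSeries 1 (q ^ n)) := by
  rw [xT, Xtate, (hasSum_xTerm hk hv hq).tsum_eq, s1ser_eq_mul_sigmaSeries]

theorem α₃T_eq_lambertSeries (hk : k < n) (hv : ‖v‖ = 1) (hq : q ∈ ball (0 : ℂ) (1 / 2)) :
    α₃T n k v q = lambertSeries α₃Kernel v n k 0 q - lambertSeries α₃Kernel v⁻¹ n (n - k) 0 q := by
  have hX := hasSum_xTerm hk hv hq
  have hY := (((hasSum_α₃Term hk hv hq).sub hX).div_const 2).congr_fun fun m =>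
    show ((q ^ n) ^ m * (v * q ^ k)) ^ 2 / (1 - (q ^ n) ^ m * (v * q ^ k)) ^ 3 = _ by ring
  rw [α₃T, xT, yT, Xtate, Ytate, hX.tsum_eq, hY.tsum_eq]
  ring

def tateOrder (n k : ℕ) : ℕ := min k (n - k)

noncomputable def xQuot (n k : ℕ) (v q : ℂ) : ℂ :=
  lambertSeries xKernel v n k (tateOrder n k) q
    + lambertSeries xKernel v⁻¹ n (n - k) (tateOrder n k) q
    - 2 * (q ^ (n - tateOrder n k) * sigmaSeries 1 (q ^ n))

noncomputable def α₃Quot (n k : ℕ) (v q : ℂ) : ℂ :=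
  lambertSeries α₃Kernel v n k (tateOrder n k) q
    - lambertSeries α₃Kernel v⁻¹ n (n - k) (tateOrder n k) q

noncomputable def a4Quot (n k : ℕ) (q : ℂ) : ℂ :=
  -5 * (q ^ (n - tateOrder n k) * sigmaSeries 3 (q ^ n))

theorem tateOrder_le_left : tateOrder n k ≤ k := min_le_left _ _

theorem tateOrder_le_sub : tateOrder n k ≤ n - k := min_le_right _ _

theorem tateOrder_of_two_mul_le (h : 2 * k ≤ n) : tateOrder n k = k := min_eq_left (by omega)

theorem tateOrder_of_le_two_mul (h : n ≤ 2 * k) : tateOrder n k = n - k :=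
  min_eq_right (by omega)

theorem pow_tateOrder_mul_pow_sub (hk : k < n) (q : ℂ) :
    q ^ tateOrder n k * q ^ (n - tateOrder n k) = q ^ n := by
  rw [← pow_add, Nat.add_sub_cancel' (by unfold tateOrder; omega)]

theorem xT_eq_pow_mul (hk : k < n) (hv : ‖v‖ = 1) (hq : q ∈ ball (0 : ℂ) (1 / 2)) :
    xT n k v q = q ^ tateOrder n k * xQuot n k v q := by
  rw [xT_eq_lambertSeries hk hv hq, xQuot, mul_sub, mul_add,
    pow_mul_lambertSeries tateOrder_le_left, pow_mul_lambertSeries tateOrder_le_sub]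
  linear_combination 2 * sigmaSeries 1 (q ^ n) * pow_tateOrder_mul_pow_sub hk q

theorem α₃T_eq_pow_mul (hk : k < n) (hv : ‖v‖ = 1) (hq : q ∈ ball (0 : ℂ) (1 / 2)) :
    α₃T n k v q = q ^ tateOrder n k * α₃Quot n k v q := by
  rw [α₃T_eq_lambertSeries hk hv hq, α₃Quot, mul_sub,
    pow_mul_lambertSeries tateOrder_le_left, pow_mul_lambertSeries tateOrder_le_sub]

theorem a4T_eq_pow_mul (hk : k < n) (q : ℂ) : a4T n q = q ^ tateOrder n k * a4Quot n k q := by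
  rw [a4T_eq_mul_sigmaSeries, a4Quot]
  linear_combination 5 * sigmaSeries 3 (q ^ n) * pow_tateOrder_mul_pow_sub hk q

theorem differentiableOn_sigmaSeries_comp_pow (i : ℕ) (hn : n ≠ 0) :
    DifferentiableOn ℂ (fun q => sigmaSeries i (q ^ n)) (ball 0 (1 / 2)) :=
  (differentiableOn_sigmaSeries i (ρ := 1 / 2) (by norm_num) (by norm_num)).comp
    (differentiableOn_pow n)
    fun q hq => by simpa using norm_mul_pow_lt (c := 1) (by simp) (by norm_num) hq hn

theorem differentiableOn_xQuot (hk : k < n) (hv : ‖v‖ = 1) :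
    DifferentiableOn ℂ (xQuot n k v) (ball 0 (1 / 2)) := by
  have hL := fun c (hc : ‖c‖ ≤ 1) b (hb : tateOrder n k ≤ b) =>
    differentiableOn_lambertSeries differentiableOn_xKernel (fun _ hw => norm_xKernel_le hw) hc
      (by norm_num) (by norm_num) (a := n) (by omega) hb
  exact ((hL v hv.le k tateOrder_le_left).add
    (hL v⁻¹ (norm_inv_le_one_of_norm_eq_one hv) (n - k) tateOrder_le_sub)).sub
    (((differentiableOn_pow _).mul
      (differentiableOn_sigmaSeries_comp_pow 1 (by omega))).const_mul 2)

theorem differentiableOn_α₃Quot (hk : k < n) (hv : ‖v‖ = 1) :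
    DifferentiableOn ℂ (α₃Quot n k v) (ball 0 (1 / 2)) := by
  have hL := fun c (hc : ‖c‖ ≤ 1) b (hb : tateOrder n k ≤ b) =>
    differentiableOn_lambertSeries differentiableOn_α₃Kernel (fun _ hw => norm_α₃Kernel_le hw) hc
      (by norm_num) (by norm_num) (a := n) (by omega) hb
  exact (hL v hv.le k tateOrder_le_left).sub
    (hL v⁻¹ (norm_inv_le_one_of_norm_eq_one hv) (n - k) tateOrder_le_sub)

theorem differentiableOn_a4Quot (hk : k < n) :
    DifferentiableOn ℂ (a4Quot n k) (ball 0 (1 / 2)) :=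
  ((differentiableOn_pow _).mul (differentiableOn_sigmaSeries_comp_pow 3 (by omega))).const_mul _

theorem differentiableOn_xT (hk : k < n) (hv : ‖v‖ = 1) :
    DifferentiableOn ℂ (xT n k v) (ball 0 (1 / 2)) :=
  ((differentiableOn_pow _).mul (differentiableOn_xQuot hk hv)).congr
    fun _ hq => xT_eq_pow_mul hk hv hq

theorem differentiableOn_α₃T (hk : k < n) (hv : ‖v‖ = 1) :
    DifferentiableOn ℂ (α₃T n k v) (ball 0 (1 / 2)) :=
  ((differentiableOn_pow _).mul (differentiableOn_α₃Quot hk hv)).congr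
    fun _ hq => α₃T_eq_pow_mul hk hv hq

theorem differentiableOn_yT (hk : k < n) (hv : ‖v‖ = 1) :
    DifferentiableOn ℂ (yT n k v) (ball 0 (1 / 2)) :=
  (((differentiableOn_α₃T hk hv).sub (differentiableOn_xT hk hv)).div_const 2).congr
    fun q _ => by rw [Pi.sub_apply, α₃T]; ring

theorem α₃Quot_apply_zero_of_two_mul_lt (h : 2 * k < n) :
    α₃Quot n k v 0 = v * α₃Kernel (v * 0 ^ k) := by
  rw [α₃Quot, tateOrder_of_two_mul_le h.le,
    lambertSeries_self_apply_zero (by omega), lambertSeries_apply_zero_of_lt (by omega), sub_zero]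

theorem α₃Quot_apply_zero_of_two_mul_eq (h : 2 * k = n) (hk : 0 < k) :
    α₃Quot n k v 0 = v - v⁻¹ := by
  rw [α₃Quot, tateOrder_of_two_mul_le h.le, show n - k = k by omega,
    lambertSeries_self_apply_zero (by omega), lambertSeries_self_apply_zero (by omega),
    zero_pow hk.ne', mul_zero, mul_zero, α₃Kernel_zero, mul_one, mul_one]

theorem α₃Quot_apply_zero_of_lt_two_mul (hk : k < n) (h : n < 2 * k) :
    α₃Quot n k v 0 = -v⁻¹ := by
  rw [α₃Quot, tateOrder_of_le_two_mul h.le,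
    lambertSeries_apply_zero_of_lt (by omega), lambertSeries_self_apply_zero (by omega),
    zero_pow (show n - k ≠ 0 by omega), mul_zero, α₃Kernel_zero, mul_one, zero_sub]

theorem α₃T_apply_zero_of_eq_zero (hn : 0 < n) (hv : ‖v‖ = 1) :
    α₃T n 0 v 0 = (v + v ^ 2) / (1 - v) ^ 3 := by
  rw [α₃T_eq_pow_mul hn hv (mem_ball_self (by norm_num)), α₃Quot_apply_zero_of_two_mul_lt
    (by omega), tateOrder, Nat.zero_min, pow_zero, one_mul, mul_one, α₃Kernel]
  ring

theorem α₃Quot_apply_zero_ne_zero (hk : k < n) (hv : ‖v‖ = 1)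
    (hv' : (k = 0 ∨ 2 * k = n) → (v ≠ 1 ∧ v ≠ -1)) : α₃Quot n k v 0 ≠ 0 := by
  have hv0 : v ≠ 0 := norm_ne_zero_iff.mp (by rw [hv]; norm_num)
  rcases lt_trichotomy (2 * k) n with hlt | heq | hgt
  · rw [α₃Quot_apply_zero_of_two_mul_lt hlt]
    rcases Nat.eq_zero_or_pos k with rfl | hk0
    · obtain ⟨hv1, hvm1⟩ := hv' (Or.inl rfl)
      rw [pow_zero, mul_one, α₃Kernel]
      exact mul_ne_zero hv0 (div_ne_zero (fun h => hvm1 (by linear_combination h))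
        (pow_ne_zero 3 (sub_ne_zero.mpr (Ne.symm hv1))))
    · rwa [zero_pow hk0.ne', mul_zero, α₃Kernel_zero, mul_one]
  · rw [α₃Quot_apply_zero_of_two_mul_eq heq (by omega)]
    obtain ⟨hv1, hvm1⟩ := hv' (Or.inr heq)
    intro h
    have hsq : (v - 1) * (v + 1) = 0 := by
      field_simp at h
      linear_combination h
    rcases mul_eq_zero.mp hsq with h1 | h1
    · exact hv1 (by linear_combination h1)
    · exact hvm1 (by linear_combination h1)
  · rw [α₃Quot_apply_zero_of_lt_two_mul hk hgt]
    exact neg_ne_zero.mpr (inv_ne_zero hv0)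

theorem exists_forall_mem_ball_ne_zero {f : ℂ → ℂ} {ρ : ℝ} (hρ : 0 < ρ) (hf : ContinuousAt f 0)
    (h0 : f 0 ≠ 0) : ∃ ε, 0 < ε ∧ ε ≤ ρ ∧ ∀ q ∈ ball (0 : ℂ) ε, f q ≠ 0 := by
  obtain ⟨δ, hδ, hne⟩ := eventually_nhds_iff_ball.mp (hf.eventually_ne h0)
  exact ⟨min δ ρ, lt_min hδ hρ, min_le_right _ _,
    fun q hq => hne q (ball_subset_ball (min_le_left _ _) hq)⟩

theorem extendsHolo_div_of_eq_pow_mul {ε : ℝ} {r : ℕ} {f g F G : ℂ → ℂ}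
    (hF : DifferentiableOn ℂ F (ball 0 ε)) (hG : DifferentiableOn ℂ G (ball 0 ε))
    (hG0 : ∀ q ∈ ball (0 : ℂ) ε, G q ≠ 0) (hf : ∀ q ∈ ball (0 : ℂ) ε, f q = q ^ r * F q)
    (hg : ∀ q ∈ ball (0 : ℂ) ε, g q = q ^ r * G q) :
    ExtendsHolo ε (fun q => F q / G q) (fun q => f q / g q) :=
  ⟨hF.div hG hG0, fun q hq hq0 => by
    dsimp only
    rw [hf q hq, hg q hq, mul_div_mul_left _ _ (pow_ne_zero r hq0)]⟩

section Quotients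

variable {ε : ℝ}

theorem exists_extendsHolo_α₁T (hk : k < n) (hv : ‖v‖ = 1) (hε : ε ≤ 1 / 2)
    (hne : ∀ q ∈ ball (0 : ℂ) ε, α₃Quot n k v q ≠ 0) :
    ∃ g, ExtendsHolo ε g (α₁T n k v) := by
  have hsub := ball_subset_ball (x := (0 : ℂ)) hε
  have hx := (differentiableOn_xQuot hk hv).mono hsub
  exact ⟨_, extendsHolo_div_of_eq_pow_mul (r := tateOrder n k)
    (F := fun q => xQuot n k v q + 6 * (q ^ tateOrder n k * xQuot n k v q ^ 2) + 2 * a4Quot n k q)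
    ((hx.add (((differentiableOn_pow _).mul (hx.pow 2)).const_mul 6)).add
      (((differentiableOn_a4Quot hk).mono hsub).const_mul 2))
    ((differentiableOn_α₃Quot hk hv).mono hsub) hne
    (fun q hq => by rw [xT_eq_pow_mul hk hv (hsub hq), a4T_eq_pow_mul hk]; ring)
    (fun q hq => α₃T_eq_pow_mul hk hv (hsub hq))⟩

theorem exists_extendsHolo_s'T (hk : k < n) (hv : ‖v‖ = 1) (hε : ε ≤ 1 / 2)
    (hne : ∀ q ∈ ball (0 : ℂ) ε, α₃Quot n k v q ≠ 0) :
    ∃ g, ExtendsHolo ε g (s'T n k v) := by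
  have hsub := ball_subset_ball (x := (0 : ℂ)) hε
  have hx := (differentiableOn_xQuot hk hv).mono hsub
  exact ⟨_, extendsHolo_div_of_eq_pow_mul (r := tateOrder n k)
    (F := fun q => a4Quot n k q - xQuot n k v q + 3 * (q ^ tateOrder n k * xQuot n k v q ^ 2))
    ((((differentiableOn_a4Quot hk).mono hsub).sub hx).add
      (((differentiableOn_pow _).mul (hx.pow 2)).const_mul 3))
    ((differentiableOn_α₃Quot hk hv).mono hsub) hne
    (fun q hq => by rw [xT_eq_pow_mul hk hv (hsub hq), a4T_eq_pow_mul hk]; ring)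
    (fun q hq => α₃T_eq_pow_mul hk hv (hsub hq))⟩

theorem exists_extendsHolo_α₂T (hk : k < n) (hv : ‖v‖ = 1) (hε : ε ≤ 1 / 2)
    (hne : ∀ q ∈ ball (0 : ℂ) ε, α₃Quot n k v q ≠ 0) :
    ∃ g, ExtendsHolo ε g (α₂T n k v) := by
  have hsub := ball_subset_ball (x := (0 : ℂ)) hε
  obtain ⟨S, hSd, hS⟩ := exists_extendsHolo_s'T hk hv hε hne
  refine ⟨fun q => 3 * (q ^ tateOrder n k * xQuot n k v q) - S q - S q ^ 2,
    ((((differentiableOn_pow _).mul ((differentiableOn_xQuot hk hv).mono hsub)).const_mul 3).sub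
      hSd).sub (hSd.pow 2), fun q hq hq0 => ?_⟩
  rw [α₂T, ← hS q hq hq0, xT_eq_pow_mul hk hv (hsub hq)]

end Quotients

end TateCurve

open TateCurve

theorem alpha_holomorphic_general (n k : ℕ) (hk : k < n) (v : ℂ)
    (hv : ‖v‖ = 1)
    (hv' : (k = 0 ∨ 2 * k = n) → (v ≠ 1 ∧ v ≠ -1)) :
    (∃ ε : ℝ, 0 < ε ∧ ε ≤ 1 ∧ ∃ g : ℂ → ℂ, ExtendsHolo ε g (xT n k v)) ∧
    (∃ ε : ℝ, 0 < ε ∧ ε ≤ 1 ∧ ∃ g : ℂ → ℂ, ExtendsHolo ε g (yT n k v)) ∧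
    ∃ ε : ℝ, 0 < ε ∧ ε < 1 ∧
      (∀ q : ℂ, q ≠ 0 → ‖q‖ < ε → α₃T n k v q ≠ 0) ∧
      (∃ g : ℂ → ℂ, ExtendsHolo ε g (α₁T n k v)) ∧
      (∃ g : ℂ → ℂ, ExtendsHolo ε g (α₂T n k v)) ∧
      ∃ g₃ : ℂ → ℂ, ExtendsHolo ε g₃ (α₃T n k v) ∧
        (k = 0 → g₃ 0 = (v + v ^ 2) / (1 - v) ^ 3) ∧
        (0 < k → 2 * k < n →
          ∃ h : ℂ → ℂ, DifferentiableOn ℂ h (Metric.ball (0 : ℂ) ε) ∧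
            (∀ q ∈ Metric.ball (0 : ℂ) ε, g₃ q = q ^ k * h q) ∧ h 0 = v) ∧
        (2 * k = n →
          ∃ h : ℂ → ℂ, DifferentiableOn ℂ h (Metric.ball (0 : ℂ) ε) ∧
            (∀ q ∈ Metric.ball (0 : ℂ) ε, g₃ q = q ^ k * h q) ∧ h 0 = v - v⁻¹) ∧
        (n < 2 * k →
          ∃ h : ℂ → ℂ, DifferentiableOn ℂ h (Metric.ball (0 : ℂ) ε) ∧
            (∀ q ∈ Metric.ball (0 : ℂ) ε, g₃ q = q ^ (n - k) * h q) ∧ h 0 = -v⁻¹) := by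
  obtain ⟨ε, hε0, hε, hne⟩ := exists_forall_mem_ball_ne_zero (by norm_num : (0 : ℝ) < 1 / 2)
    ((differentiableOn_α₃Quot hk hv).continuousOn.continuousAt (ball_mem_nhds 0 (by norm_num)))
    (α₃Quot_apply_zero_ne_zero hk hv hv')
  have hsub : ball (0 : ℂ) ε ⊆ ball 0 (1 / 2) := ball_subset_ball hε
  have hfac : ∀ q ∈ ball (0 : ℂ) ε, α₃T n k v q = q ^ tateOrder n k * α₃Quot n k v q :=
    fun q hq => α₃T_eq_pow_mul hk hv (hsub hq)
  have hα₃ := (differentiableOn_α₃Quot hk hv).mono hsub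
  refine ⟨⟨1 / 2, by norm_num, by norm_num, xT n k v, differentiableOn_xT hk hv, fun _ _ _ => rfl⟩,
    ⟨1 / 2, by norm_num, by norm_num, yT n k v, differentiableOn_yT hk hv, fun _ _ _ => rfl⟩,
    ε, hε0, by linarith, fun q hq0 hqε => ?_, exists_extendsHolo_α₁T hk hv hε hne,
    exists_extendsHolo_α₂T hk hv hε hne, α₃T n k v,
    ⟨(differentiableOn_α₃T hk hv).mono hsub, fun _ _ _ => rfl⟩,
    fun hk0 => by subst hk0; exact α₃T_apply_zero_of_eq_zero hk hv,
    fun hk0 hlt => ⟨α₃Quot n k v, hα₃, by rwa [tateOrder_of_two_mul_le hlt.le] at hfac, ?_⟩,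
    fun heq => ⟨α₃Quot n k v, hα₃, by rwa [tateOrder_of_two_mul_le heq.le] at hfac,
      α₃Quot_apply_zero_of_two_mul_eq heq (by omega)⟩,
    fun hgt => ⟨α₃Quot n k v, hα₃, by rwa [tateOrder_of_le_two_mul hgt.le] at hfac,
      α₃Quot_apply_zero_of_lt_two_mul hk hgt⟩⟩
  · have hq : q ∈ ball (0 : ℂ) ε := mem_ball_zero_iff.mpr hqε
    rw [hfac q hq]
    exact mul_ne_zero (pow_ne_zero _ hq0) (hne q hq)
  · rw [α₃Quot_apply_zero_of_two_mul_lt hlt, zero_pow hk0.ne', mul_zero, α₃Kernel_zero, mul_one]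

/-- For `n ≥ 3`, `0 ≤ k < n` and `|v| = 1` (with `v ≠ ±1` when `k = 0` or `2k = n`), the
functions `x`, `y` extend holomorphically across `q = 0`; there is `ε ∈ (0,1)` such that
`α₃(q) ≠ 0` for `0 < |q| < ε` and `α₁, α₂, α₃` extend holomorphically across `q = 0` on
`|q| < ε`; moreover the holomorphic extension of `α₃` vanishes at `0` to order `0` with
value `(v+v²)/(1−v)³` if `k = 0`, to order exactly `k` with leading coefficient `v` if
`0 < k < n/2`, to order exactly `n/2` with leading coefficient `v − v⁻¹` if `2k = n`, and
to order exactly `n−k` with leading coefficient `−v⁻¹` if `n/2 < k < n`. -/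
theorem alpha_holomorphic (n k : ℕ) (hn : 3 ≤ n) (hk : k < n) (v : ℂ)
    (hv : ‖v‖ = 1)
    (hv' : (k = 0 ∨ 2 * k = n) → (v ≠ 1 ∧ v ≠ -1)) :
    (∃ ε : ℝ, 0 < ε ∧ ε ≤ 1 ∧ ∃ g : ℂ → ℂ, ExtendsHolo ε g (xT n k v)) ∧
    (∃ ε : ℝ, 0 < ε ∧ ε ≤ 1 ∧ ∃ g : ℂ → ℂ, ExtendsHolo ε g (yT n k v)) ∧
    ∃ ε : ℝ, 0 < ε ∧ ε < 1 ∧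
      (∀ q : ℂ, q ≠ 0 → ‖q‖ < ε → α₃T n k v q ≠ 0) ∧
      (∃ g : ℂ → ℂ, ExtendsHolo ε g (α₁T n k v)) ∧
      (∃ g : ℂ → ℂ, ExtendsHolo ε g (α₂T n k v)) ∧
      ∃ g₃ : ℂ → ℂ, ExtendsHolo ε g₃ (α₃T n k v) ∧
        (k = 0 → g₃ 0 = (v + v ^ 2) / (1 - v) ^ 3) ∧
        (0 < k → 2 * k < n →
          ∃ h : ℂ → ℂ, DifferentiableOn ℂ h (Metric.ball (0 : ℂ) ε) ∧
            (∀ q ∈ Metric.ball (0 : ℂ) ε, g₃ q = q ^ k * h q) ∧ h 0 = v) ∧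
        (2 * k = n →
          ∃ h : ℂ → ℂ, DifferentiableOn ℂ h (Metric.ball (0 : ℂ) ε) ∧
            (∀ q ∈ Metric.ball (0 : ℂ) ε, g₃ q = q ^ k * h q) ∧ h 0 = v - v⁻¹) ∧
        (n < 2 * k →
          ∃ h : ℂ → ℂ, DifferentiableOn ℂ h (Metric.ball (0 : ℂ) ε) ∧
            (∀ q ∈ Metric.ball (0 : ℂ) ε, g₃ q = q ^ (n - k) * h q) ∧ h 0 = -v⁻¹) :=
  alpha_holomorphic_general n k hk v hv hv'
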